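/- For positive integers p and q, the local energy of the complete bipartite graph K_{p,q} is e(K_{p,q}) = 2(p+q)√(pq) − 2p√((p−1)q) − 2q√((q−1)p). -/

import Mathlib

open SimpleGraph Matrix Finset

noncomputable section

/-- The adjacency matrix of a simple graph over `ℝ` is Hermitian. -/
lemma adjMatrix_isHermitian {V : Type*} [Fintype V] (G : SimpleGraph V)
    [DecidableRel G.Adj] : (G.adjMatrix ℝ).IsHermitian := by
  rw [Matrix.IsHermitian, Matrix.conjTranspose_eq_transpose_of_trivial]
  exact G.isSymm_adjMatrix

/-- The energy of a finite simple graph: the sum of the absolute values of the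
eigenvalues of its adjacency matrix. -/
def graphEnergy {V : Type*} [Fintype V] [DecidableEq V] (G : SimpleGraph V) : ℝ :=
  letI := Classical.decRel G.Adj
  ∑ i, |(adjMatrix_isHermitian G).eigenvalues i|

/-- The local energy of `G` at a vertex `v`: the energy of `G` minus the energy of the
induced subgraph obtained by deleting `v`. -/
def localEnergyAt {V : Type*} [Fintype V] [DecidableEq V] (G : SimpleGraph V) (v : V) : ℝ :=
  graphEnergy G - graphEnergy (G.induce {u | u ≠ v})

/-- The local energy of `G`: the sum of the local energies at all vertices. -/
def localEnergy {V : Type*} [Fintype V] [DecidableEq V] (G : SimpleGraph V) : ℝ :=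
  ∑ v, localEnergyAt G v

end

/-!
The adjacency matrix of a graph that is complete bipartite between `{v | P v}` and
`{v | ¬P v}` is `a bᵀ + b aᵀ`, where `a` and `b` are the indicator vectors of the two parts.
It has trace `0` and rank at most `2`, so its only nonzero eigenvalues are `±λ` with
`2λ² = tr A² = 2 |P| |¬P|`, and its energy is `2 √(|P| |¬P|)`. Deleting a vertex leaves a
graph of the same kind with one part smaller by one, and summing over the vertices gives
`e(K_{p,q})`.
-/

theorem sum_abs_eq_sqrt_two_mul_sum_sq_of_card_support_le_two {ι : Type*} [Fintype ι]
    {f : ι → ℝ} (hsum : ∑ i, f i = 0) (hsupp : #{i | f i ≠ 0} ≤ 2) :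
    ∑ i, |f i| = √(2 * ∑ i, f i ^ 2) := by
  set S : Finset ι := {i | f i ≠ 0}
  have sum_over_support : ∀ g : ℝ → ℝ, g 0 = 0 → ∑ i ∈ S, g (f i) = ∑ i, g (f i) := fun g hg =>
    sum_subset (subset_univ S) fun i _ hi => by simp_all [S]
  rw [← sum_over_support _ abs_zero, ← sum_over_support (· ^ 2) (zero_pow two_ne_zero)]
  replace hsum : ∑ i ∈ S, f i = 0 := (sum_over_support id rfl).trans hsum
  have hf : ∀ i ∈ S, f i ≠ 0 := fun i hi => (mem_filter.mp hi).2
  clear_value S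
  classical
  interval_cases hS : #S
  · simp [card_eq_zero.mp hS]
  · obtain ⟨a, rfl⟩ := card_eq_one.mp hS
    simp_all
  · obtain ⟨a, b, hab, hSab⟩ := card_eq_two.mp hS
    subst hSab
    simp only [sum_pair hab] at hsum ⊢
    rw [show f b = -f a by linarith, abs_neg, neg_sq,
      show 2 * (f a ^ 2 + f a ^ 2) = (2 * f a) ^ 2 by ring, Real.sqrt_sq_eq_abs, abs_mul, abs_two]
    ring

namespace Matrix

variable {n : Type*} [Fintype n]

theorem rank_add_le {K : Type*} [Field K] {m : Type*} [Fintype m] (A B : Matrix m n K) :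
    (A + B).rank ≤ A.rank + B.rank := by
  rw [rank, rank, rank, mulVecLin_add]
  exact (Submodule.finrank_mono (LinearMap.range_add_le _ _)).trans
    (Submodule.finrank_add_le_finrank_add_finrank _ _)

theorem rank_vecMulVec_add_vecMulVec_le {K : Type*} [Field K] (a b : n → K) :
    (vecMulVec a b + vecMulVec b a).rank ≤ 2 :=
  (rank_add_le _ _).trans (add_le_add (rank_vecMulVec_le a b) (rank_vecMulVec_le b a))

variable [DecidableEq n]

theorem IsHermitian.trace_pow_eq_sum_eigenvalues_pow {𝕜 : Type*} [RCLike 𝕜]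
    {A : Matrix n n 𝕜} (hA : A.IsHermitian) (k : ℕ) :
    (A ^ k).trace = ∑ i, (hA.eigenvalues i : 𝕜) ^ k := by
  rw [← cfc_pow_id (R := ℝ) A k hA.isSelfAdjoint, hA.cfc_eq, IsHermitian.cfc,
    Unitary.conjStarAlgAut_apply, trace_mul_cycle, Unitary.coe_star_mul_self, one_mul,
    trace_diagonal]
  simp

theorem trace_sq_vecMulVec_add_vecMulVec {R : Type*} [CommRing R] {a b : n → R} (hab : a ⬝ᵥ b = 0) :
    ((vecMulVec a b + vecMulVec b a) ^ 2).trace = 2 * ((a ⬝ᵥ a) * (b ⬝ᵥ b)) := by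
  simp only [sq, add_mul, mul_add, vecMulVec_mul_vecMulVec, dotProduct_comm b a, hab, zero_smul,
    vecMulVec_zero, trace_add, trace_zero, trace_vecMulVec, dotProduct_smul, smul_eq_mul]
  ring

theorem IsHermitian.sum_abs_eigenvalues_eq_sqrt_of_rank_le_two {A : Matrix n n ℝ}
    (hA : A.IsHermitian) (htrace : A.trace = 0) (hrank : A.rank ≤ 2) :
    ∑ i, |hA.eigenvalues i| = √(2 * (A ^ 2).trace) := by
  rw [hA.trace_eq_sum_eigenvalues] at htrace
  rw [hA.rank_eq_card_non_zero_eigs, Fintype.card_subtype] at hrank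
  rw [hA.trace_pow_eq_sum_eigenvalues_pow]
  exact sum_abs_eq_sqrt_two_mul_sum_sq_of_card_support_le_two (by simpa using htrace) hrank

theorem IsHermitian.sum_abs_eigenvalues_of_eq_vecMulVec_add_vecMulVec {A : Matrix n n ℝ}
    (hA : A.IsHermitian) {a b : n → ℝ} (hAab : A = vecMulVec a b + vecMulVec b a)
    (hab : a ⬝ᵥ b = 0) :
    ∑ i, |hA.eigenvalues i| = 2 * √((a ⬝ᵥ a) * (b ⬝ᵥ b)) := by
  have htrace : A.trace = 0 := by
    rw [hAab, trace_add, trace_vecMulVec, trace_vecMulVec, dotProduct_comm b a, hab, add_zero]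
  rw [hA.sum_abs_eigenvalues_eq_sqrt_of_rank_le_two htrace
    (hAab ▸ rank_vecMulVec_add_vecMulVec_le a b), hAab, trace_sq_vecMulVec_add_vecMulVec hab,
    ← mul_assoc, show (2 : ℝ) * 2 = 2 ^ 2 by norm_num, Real.sqrt_mul (sq_nonneg 2),
    Real.sqrt_sq zero_le_two]

end Matrix

section CompleteBipartite

variable {V : Type*} [Fintype V] [DecidableEq V] {G : SimpleGraph V} {P : V → Prop}
  [DecidablePred P]

theorem graphEnergy_of_adj_iff_xor (hG : ∀ u w, G.Adj u w ↔ Xor (P u) (P w)) :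
    graphEnergy G = 2 * √((#{v | P v} : ℝ) * #{v | ¬P v}) := by
  let := Classical.decRel G.Adj
  set a : V → ℝ := fun v => if P v then 1 else 0
  set b : V → ℝ := fun v => if ¬P v then 1 else 0
  have hAab : G.adjMatrix ℝ = vecMulVec a b + vecMulVec b a := by
    ext u w
    by_cases hu : P u <;> by_cases hw : P w <;> simp [a, b, hG, hu, hw, vecMulVec_apply]
  have hab : a ⬝ᵥ b = 0 := by
    simp only [a, b, dotProduct, ite_zero_mul_ite_zero, and_not_self, if_false, sum_const_zero]
  have haa : a ⬝ᵥ a = #{v | P v} := by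
    simp only [a, dotProduct, ite_zero_mul_ite_zero, and_self, mul_one, sum_boole]
  have hbb : b ⬝ᵥ b = #{v | ¬P v} := by
    simp only [b, dotProduct, ite_zero_mul_ite_zero, and_self, mul_one, sum_boole]
  rw [graphEnergy,
    (adjMatrix_isHermitian G).sum_abs_eigenvalues_of_eq_vecMulVec_add_vecMulVec hAab hab, haa, hbb]

theorem card_filter_subtype_ne (v : V) :
    #{x : {u | u ≠ v} | P x} = #(({u | P u} : Finset V).erase v) := by
  rw [← card_map (Function.Embedding.subtype _)]
  congr 1
  ext u
  simp [and_comm]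

theorem localEnergyAt_of_adj_iff_xor_of_pos (hG : ∀ u w, G.Adj u w ↔ Xor (P u) (P w)) {v : V}
    (hv : P v) :
    localEnergyAt G v = 2 * √((#{u | P u} : ℝ) * #{u | ¬P u})
      - 2 * √(((#{u | P u} : ℝ) - 1) * #{u | ¬P u}) := by
  have hGv : ∀ x y : {u | u ≠ v}, (G.induce {u | u ≠ v}).Adj x y ↔ Xor (P x) (P y) :=
    fun x y => hG x y
  have hpos : (#{x : {u | u ≠ v} | P x} : ℝ) = #{u | P u} - 1 := by
    rw [card_filter_subtype_ne, ← card_erase_add_one (mem_filter.2 ⟨mem_univ v, hv⟩)]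
    push_cast
    ring
  have hneg : #{x : {u | u ≠ v} | ¬P x} = #{u | ¬P u} := by
    rw [card_filter_subtype_ne (P := fun u => ¬P u), erase_eq_of_notMem (by simp [hv])]
  rw [localEnergyAt, graphEnergy_of_adj_iff_xor hG, graphEnergy_of_adj_iff_xor hGv, hpos, hneg]

theorem localEnergyAt_of_adj_iff_xor_of_neg (hG : ∀ u w, G.Adj u w ↔ Xor (P u) (P w)) {v : V}
    (hv : ¬P v) :
    localEnergyAt G v = 2 * √((#{u | P u} : ℝ) * #{u | ¬P u})
      - 2 * √(((#{u | ¬P u} : ℝ) - 1) * #{u | P u}) := by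
  have hG' : ∀ u w, G.Adj u w ↔ Xor (¬P u) (¬P w) := fun u w => (hG u w).trans xor_not_not.symm
  rw [localEnergyAt_of_adj_iff_xor_of_pos hG' hv]
  simp only [not_not, mul_comm]

theorem localEnergy_of_adj_iff_xor (hG : ∀ u w, G.Adj u w ↔ Xor (P u) (P w)) :
    localEnergy G = 2 * ((#{u | P u} : ℝ) + #{u | ¬P u}) * √((#{u | P u} : ℝ) * #{u | ¬P u})
      - 2 * (#{u | P u} : ℝ) * √(((#{u | P u} : ℝ) - 1) * #{u | ¬P u})
      - 2 * (#{u | ¬P u} : ℝ) * √(((#{u | ¬P u} : ℝ) - 1) * #{u | P u}) := by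
  rw [localEnergy, ← sum_filter_add_sum_filter_not univ P,
    sum_congr rfl fun v hv => localEnergyAt_of_adj_iff_xor_of_pos hG (mem_filter.1 hv).2,
    sum_congr rfl fun v hv => localEnergyAt_of_adj_iff_xor_of_neg hG (mem_filter.1 hv).2,
    sum_const, sum_const, nsmul_eq_mul, nsmul_eq_mul]
  ring

end CompleteBipartite

theorem localEnergy_completeBipartiteGraph (p q : ℕ) :
    localEnergy (completeBipartiteGraph (Fin p) (Fin q)) =
      2 * ((p : ℝ) + q) * Real.sqrt ((p : ℝ) * q)
        - 2 * (p : ℝ) * Real.sqrt (((p : ℝ) - 1) * q)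
        - 2 * (q : ℝ) * Real.sqrt (((q : ℝ) - 1) * p) := by
  have hG : ∀ u w, (completeBipartiteGraph (Fin p) (Fin q)).Adj u w ↔ Xor u.isLeft w.isLeft := by
    rintro (u | u) (w | w) <;> simp
  have hp : #{u : Fin p ⊕ Fin q | u.isLeft} = p := by
    rw [show ({u | u.isLeft} : Finset (Fin p ⊕ Fin q)) = univ.map .inl by ext (u | u) <;> simp,
      card_map, card_fin]
  have hq : #{u : Fin p ⊕ Fin q | ¬u.isLeft} = q := by
    rw [show ({u | ¬u.isLeft} : Finset (Fin p ⊕ Fin q)) = univ.map .inr by ext (u | u) <;> simp,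
      card_map, card_fin]
  rw [localEnergy_of_adj_iff_xor hG, hp, hq]
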